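/- arXiv:1106.4730 — 2 statements merged into one kernel-verified Lean document; each statement's English description precedes it below -/
import Mathlib

section
/- Suppose for each level ℓ = 0,…,L there are independent estimators Ŷ_ℓ with E[Ŷ_0] = E[P̂_0], E[Ŷ_ℓ] = E[P̂_ℓ − P̂_{ℓ−1}] for ℓ > 0, and there exist constants c₁, c₂ > 0, α ≥ 1/2, β > 1 such that |E[P̂_ℓ − P]| ≤ c₁ h_ℓ^α and Var[Ŷ_ℓ] ≤ c₂ N_ℓ^{−1} h_ℓ^β, with cost of Ŷ_ℓ bounded by c₃ N_ℓ h_ℓ^{−1}. Then there is a constant c₄ such that for every ε < e^{−1} one can choose L and N_ℓ so that the combined estimator Ŷ = Σ_{ℓ=0}^{L} Ŷ_ℓ satisfies E[(Ŷ − E[P])²] < ε² with total computational cost at most c₄ ε^{−2}. -/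
/-!
Since the level estimators are independent, the mean square error of `Ŷ` is
`∑ Var[Ŷ_ℓ] + (E[P̂_L] − E[P])²`, the means telescoping to `E[P̂_L]`.
Take `L` the first level with `c₁ h_L^α ≤ ε/2`; then `∑_{ℓ ≤ L} h_ℓ⁻¹ ≤ 2 h_L⁻¹ = O(ε^{-1/α})`,
which is `O(ε⁻²)` because `α ≥ 1/2` and `ε < 1`.
Take `N_ℓ = ⌈2 c₂ S ε⁻² h_ℓ^{(β+1)/2}⌉`, where `S = T^b / (1 - 2^{-b})`, `b = (β-1)/2 > 0`,
bounds the geometric series `∑ h_ℓ^b`: then `∑ c₂ N_ℓ⁻¹ h_ℓ^β ≤ ε²/2` and the cost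
`∑ c₃ N_ℓ h_ℓ⁻¹ ≤ c₃ (2 c₂ S² ε⁻² + ∑ h_ℓ⁻¹)`, both of the required order.
-/

open MeasureTheory ProbabilityTheory Finset

section MeanSquareError

variable {Ω : Type*} [MeasurableSpace Ω] {μ : Measure Ω}

lemma sum_integral_eq_integral_of_telescoping {Z Q : ℕ → Ω → ℝ} (hQ : ∀ ℓ, Integrable (Q ℓ) μ)
    (h0 : μ[Z 0] = μ[Q 0]) (hsucc : ∀ ℓ, 1 ≤ ℓ → μ[Z ℓ] = ∫ ω, (Q ℓ ω - Q (ℓ - 1) ω) ∂μ)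
    (L : ℕ) : ∑ ℓ ∈ range (L + 1), μ[Z ℓ] = μ[Q L] := by
  have hsucc' (ℓ : ℕ) : μ[Z (ℓ + 1)] = μ[Q (ℓ + 1)] - μ[Q ℓ] := by
    rw [hsucc _ (by omega), integral_sub (hQ _) (hQ _), Nat.add_sub_cancel]
  have htel := sum_range_sub (fun ℓ => μ[Q ℓ]) L
  rw [sum_range_succ', sum_congr rfl fun ℓ _ => hsucc' ℓ, h0]
  linarith

variable [IsProbabilityMeasure μ]

lemma integral_sub_const_sq {X : Ω → ℝ} (hX : MemLp X 2 μ) (c : ℝ) :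
    ∫ ω, (X ω - c) ^ 2 ∂μ = Var[X; μ] + (μ[X] - c) ^ 2 := by
  have hXc : MemLp (fun ω => X ω - c) 2 μ := hX.sub (memLp_const c)
  have h := variance_eq_sub hXc
  rw [variance_sub_const hX.aestronglyMeasurable,
    integral_sub (hX.integrable one_le_two) (integrable_const c)] at h
  simp only [integral_const, probReal_univ, smul_eq_mul, one_mul, Pi.pow_apply] at h
  linarith

lemma integral_sum_sub_const_sq_of_iIndepFun {ι : Type*} {X : ι → Ω → ℝ}
    (hX : ∀ i, MemLp (X i) 2 μ) (hindep : iIndepFun X μ) (s : Finset ι) (c : ℝ) :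
    ∫ ω, (∑ i ∈ s, X i ω - c) ^ 2 ∂μ = ∑ i ∈ s, Var[X i; μ] + (∑ i ∈ s, μ[X i] - c) ^ 2 := by
  have hsum := integral_sub_const_sq (memLp_finsetSum' s fun i _ => hX i) c
  simp only [Finset.sum_apply] at hsum
  rw [hsum, IndepFun.variance_sum (fun i _ => hX i) fun i _ j _ hij => hindep.indepFun hij,
    integral_finsetSum s fun i _ => (hX i).integrable one_le_two]

end MeanSquareError

section GeometricHierarchy

variable {T : ℝ}

lemma sum_div_two_pow_rpow_le (hT : 0 ≤ T) {b : ℝ} (hb : 0 < b) (n : ℕ) :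
    ∑ ℓ ∈ range n, (T / 2 ^ ℓ) ^ b ≤ T ^ b / (1 - 2 ^ (-b)) := by
  have hr0 : (0 : ℝ) ≤ 2 ^ (-b) := by positivity
  have hr1 : (2 : ℝ) ^ (-b) < 1 := Real.rpow_lt_one_of_one_lt_of_neg one_lt_two (by linarith)
  have hterm (ℓ : ℕ) : (T / 2 ^ ℓ) ^ b = T ^ b * ((2 : ℝ) ^ (-b)) ^ ℓ := by
    rw [Real.div_rpow hT (by positivity), ← Real.rpow_natCast, ← Real.rpow_natCast,
      ← Real.rpow_mul zero_le_two, ← Real.rpow_mul zero_le_two, neg_mul,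
      Real.rpow_neg zero_le_two, div_eq_mul_inv, mul_comm b]
  rw [sum_congr rfl fun ℓ _ => hterm ℓ, ← mul_sum, div_eq_mul_one_div]
  gcongr
  simpa using geom_sum_Ico_le_of_lt_one (m := 0) (n := n) hr0 hr1

lemma sum_inv_div_two_pow_le (hT : 0 ≤ T) (L : ℕ) :
    ∑ ℓ ∈ range (L + 1), (T / 2 ^ ℓ)⁻¹ ≤ 2 * (T / 2 ^ L)⁻¹ := by
  simp_rw [inv_div, ← sum_div, mul_div_assoc']
  gcongr
  rw [geom_sum_eq (by norm_num) (L + 1), pow_succ]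
  linarith

lemma exists_div_two_pow_le (hT : 0 < T) {δ : ℝ} (hδ : 0 < δ) :
    ∃ L : ℕ, T / 2 ^ L ≤ δ ∧ (T / 2 ^ L)⁻¹ ≤ 2 * max δ⁻¹ T⁻¹ := by
  obtain ⟨n, hn, hn1⟩ := exists_nat_pow_near (le_max_right (T / δ) 1) one_lt_two
  refine ⟨n + 1, ?_, ?_⟩
  · rw [div_le_iff₀ (by positivity), mul_comm, ← div_le_iff₀ hδ]
    exact (le_max_left _ _).trans hn1.le
  · have hmax : max δ⁻¹ T⁻¹ = max (T / δ) 1 / T := by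
      rw [← max_div_div_right hT.le, div_div_cancel_left' hT.ne', one_div]
    rw [inv_div, pow_succ, hmax, mul_comm, mul_div_assoc]
    gcongr

lemma exists_level_bias_le_and_sum_inv_le {c₁ α ε : ℝ} (hT : 0 < T) (hc₁ : 0 < c₁) (hα : 1 / 2 ≤ α)
    (hε : 0 < ε) (hε1 : ε < 1) :
    ∃ L : ℕ, c₁ * (T / 2 ^ L) ^ α ≤ ε / 2 ∧
      ∑ ℓ ∈ range (L + 1), (T / 2 ^ ℓ)⁻¹ ≤ 4 * ((2 * c₁) ^ α⁻¹ + T⁻¹) * (ε ^ 2)⁻¹ := by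
  have hα0 : 0 < α := by linarith
  set δ := (ε / (2 * c₁)) ^ α⁻¹
  obtain ⟨L, hLδ, hLinv⟩ := exists_div_two_pow_le hT (show 0 < δ by positivity)
  refine ⟨L, ?_, ?_⟩
  · calc c₁ * (T / 2 ^ L) ^ α ≤ c₁ * δ ^ α := by gcongr
      _ = ε / 2 := by
        rw [Real.rpow_inv_rpow (by positivity) hα0.ne']
        field_simp
  have hε2 : 1 ≤ (ε ^ 2)⁻¹ := one_le_inv₀ (by positivity) |>.2 (by nlinarith)
  have hδinv : δ⁻¹ ≤ (2 * c₁) ^ α⁻¹ * (ε ^ 2)⁻¹ := by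
    have hexp : α⁻¹ ≤ 2 := by
      rw [inv_le_comm₀ hα0 two_pos]; linarith
    rw [← Real.inv_rpow (by positivity), inv_div, div_eq_mul_inv,
      Real.mul_rpow (by positivity) (by positivity), ← inv_pow]
    gcongr
    calc ε⁻¹ ^ α⁻¹ ≤ ε⁻¹ ^ (2 : ℝ) :=
          Real.rpow_le_rpow_of_exponent_le (one_le_inv₀ hε |>.2 hε1.le) hexp
      _ = ε⁻¹ ^ 2 := Real.rpow_two _
  have hTinv : T⁻¹ ≤ T⁻¹ * (ε ^ 2)⁻¹ := le_mul_of_one_le_right (by positivity) hε2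
  calc ∑ ℓ ∈ range (L + 1), (T / 2 ^ ℓ)⁻¹ ≤ 2 * (T / 2 ^ L)⁻¹ := sum_inv_div_two_pow_le hT.le L
    _ ≤ 2 * (2 * (δ⁻¹ + T⁻¹)) := by
      gcongr
      exact hLinv.trans (by gcongr; exact max_le_add_of_nonneg (by positivity) (by positivity))
    _ ≤ 4 * ((2 * c₁) ^ α⁻¹ + T⁻¹) * (ε ^ 2)⁻¹ := by linarith

end GeometricHierarchy

section SampleSizes

variable {T β c K ε : ℝ} {N : ℕ → ℕ}

lemma sum_mul_inv_mul_div_two_pow_rpow_le (hT : 0 < T) (hβ : 1 < β) (hc : 0 ≤ c) (hK : 0 < K)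
    (hε : 0 < ε) (hN : ∀ ℓ, K * (ε ^ 2)⁻¹ * (T / 2 ^ ℓ) ^ ((β + 1) / 2) ≤ N ℓ) (n : ℕ) :
    ∑ ℓ ∈ range n, c * (N ℓ : ℝ)⁻¹ * (T / 2 ^ ℓ) ^ β
      ≤ c * ε ^ 2 / K * (T ^ ((β - 1) / 2) / (1 - 2 ^ (-((β - 1) / 2)))) := by
  have hterm (ℓ : ℕ) :
      c * (N ℓ : ℝ)⁻¹ * (T / 2 ^ ℓ) ^ β ≤ c * ε ^ 2 / K * (T / 2 ^ ℓ) ^ ((β - 1) / 2) := by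
    have hh : 0 < T / 2 ^ ℓ := by positivity
    have hsplit : (T / 2 ^ ℓ) ^ β = (T / 2 ^ ℓ) ^ ((β + 1) / 2) * (T / 2 ^ ℓ) ^ ((β - 1) / 2) := by
      rw [← Real.rpow_add hh]; ring_nf
    calc c * (N ℓ : ℝ)⁻¹ * (T / 2 ^ ℓ) ^ β
        ≤ c * (K * (ε ^ 2)⁻¹ * (T / 2 ^ ℓ) ^ ((β + 1) / 2))⁻¹ * (T / 2 ^ ℓ) ^ β := by
          gcongr; exact hN ℓ
      _ = c * ε ^ 2 / K * (T / 2 ^ ℓ) ^ ((β - 1) / 2) := by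
          rw [hsplit]
          have : 0 < (T / 2 ^ ℓ) ^ ((β + 1) / 2) := by positivity
          field_simp
  calc ∑ ℓ ∈ range n, c * (N ℓ : ℝ)⁻¹ * (T / 2 ^ ℓ) ^ β
      ≤ c * ε ^ 2 / K * ∑ ℓ ∈ range n, (T / 2 ^ ℓ) ^ ((β - 1) / 2) := by
        rw [mul_sum]; exact sum_le_sum fun ℓ _ => hterm ℓ
    _ ≤ _ := by gcongr; exact sum_div_two_pow_rpow_le hT.le (by linarith) n

lemma sum_mul_mul_inv_div_two_pow_le (hT : 0 < T) (hβ : 1 < β) (hc : 0 ≤ c) (hK : 0 ≤ K)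
    (hN : ∀ ℓ, N ℓ ≤ K * (ε ^ 2)⁻¹ * (T / 2 ^ ℓ) ^ ((β + 1) / 2) + 1) (n : ℕ) :
    ∑ ℓ ∈ range n, c * (N ℓ : ℝ) * (T / 2 ^ ℓ)⁻¹
      ≤ c * (K * (ε ^ 2)⁻¹ * (T ^ ((β - 1) / 2) / (1 - 2 ^ (-((β - 1) / 2))))
        + ∑ ℓ ∈ range n, (T / 2 ^ ℓ)⁻¹) := by
  have hterm (ℓ : ℕ) : (N ℓ : ℝ) * (T / 2 ^ ℓ)⁻¹
      ≤ K * (ε ^ 2)⁻¹ * (T / 2 ^ ℓ) ^ ((β - 1) / 2) + (T / 2 ^ ℓ)⁻¹ := by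
    have hh : 0 < T / 2 ^ ℓ := by positivity
    have hexp : (T / 2 ^ ℓ) ^ ((β + 1) / 2) * (T / 2 ^ ℓ)⁻¹ = (T / 2 ^ ℓ) ^ ((β - 1) / 2) := by
      rw [← Real.rpow_neg_one, ← Real.rpow_add hh]; ring_nf
    calc (N ℓ : ℝ) * (T / 2 ^ ℓ)⁻¹
        ≤ (K * (ε ^ 2)⁻¹ * (T / 2 ^ ℓ) ^ ((β + 1) / 2) + 1) * (T / 2 ^ ℓ)⁻¹ := by
          gcongr; exact hN ℓ
      _ = _ := by rw [add_mul, mul_assoc _ _ (T / 2 ^ ℓ)⁻¹, hexp, one_mul]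
  simp_rw [mul_assoc c, ← mul_sum]
  gcongr
  calc ∑ ℓ ∈ range n, (N ℓ : ℝ) * (T / 2 ^ ℓ)⁻¹
      ≤ K * (ε ^ 2)⁻¹ * ∑ ℓ ∈ range n, (T / 2 ^ ℓ) ^ ((β - 1) / 2)
        + ∑ ℓ ∈ range n, (T / 2 ^ ℓ)⁻¹ := by
        rw [mul_sum, ← sum_add_distrib]; exact sum_le_sum fun ℓ _ => hterm ℓ
    _ ≤ _ := by
        gcongr
        exact sum_div_two_pow_rpow_le hT.le (by linarith) n

end SampleSizes

theorem mlmc_complexity_beta_gt_one_general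
    {Ω : Type*} [MeasurableSpace Ω] (μ : Measure Ω) [IsProbabilityMeasure μ]
    (T : ℝ) (hT : 0 < T)
    (P : Ω → ℝ)
    (Phat : ℕ → Ω → ℝ) (hPhatint : ∀ ℓ, Integrable (Phat ℓ) μ)
    (Y : ℕ → ℕ → Ω → ℝ)   -- `Y ℓ N` : the estimator `Ŷ_ℓ` built from `N` samples
    (h : ℕ → ℝ) (hh : ∀ ℓ, h ℓ = T / 2 ^ ℓ)
    (c₁ c₂ c₃ α β : ℝ) (hc₁ : 0 < c₁) (hc₂ : 0 < c₂) (hc₃ : 0 < c₃)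
    (hα : (1:ℝ)/2 ≤ α) (hβ : 1 < β)
    (hYint : ∀ ℓ N, MemLp (Y ℓ N) 2 μ)
    (hindep : ∀ N : ℕ → ℕ, iIndepFun (fun ℓ => Y ℓ (N ℓ)) μ)
    (hbias : ∀ ℓ, |(∫ ω, Phat ℓ ω ∂μ) - ∫ ω, P ω ∂μ| ≤ c₁ * h ℓ ^ α)
    (hmean0 : ∀ N, ∫ ω, Y 0 N ω ∂μ = ∫ ω, Phat 0 ω ∂μ)
    (hmean : ∀ ℓ N, 1 ≤ ℓ → ∫ ω, Y ℓ N ω ∂μ = ∫ ω, (Phat ℓ ω - Phat (ℓ - 1) ω) ∂μ)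
    (hvar : ∀ ℓ N, 0 < N → variance (Y ℓ N) μ ≤ c₂ * (N : ℝ)⁻¹ * h ℓ ^ β) :
    ∃ c₄ : ℝ, 0 < c₄ ∧ ∀ ε : ℝ, 0 < ε → ε < Real.exp (-1) →
      ∃ (L : ℕ) (N : ℕ → ℕ), (∀ ℓ ≤ L, 0 < N ℓ) ∧
        (∫ ω, ((∑ ℓ ∈ Finset.range (L + 1), Y ℓ (N ℓ) ω) - ∫ ω', P ω' ∂μ) ^ 2 ∂μ < ε ^ 2) ∧
        ∑ ℓ ∈ Finset.range (L + 1), c₃ * (N ℓ : ℝ) * (h ℓ)⁻¹ ≤ c₄ * ε ^ (-2 : ℝ) := by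
  obtain rfl : h = fun ℓ => T / 2 ^ ℓ := funext hh
  set S := T ^ ((β - 1) / 2) / (1 - 2 ^ (-((β - 1) / 2)))
  have hS : 0 < S := div_pos (by positivity)
    (sub_pos.2 (Real.rpow_lt_one_of_one_lt_of_neg one_lt_two (by linarith)))
  set K := 2 * c₂ * S
  refine ⟨c₃ * (K * S + 4 * ((2 * c₁) ^ α⁻¹ + T⁻¹)), by positivity, fun ε hε hεe => ?_⟩
  have hε1 : ε < 1 := hεe.trans (Real.exp_lt_one_iff.2 (by norm_num))
  obtain ⟨L, hbiasL, hlevels⟩ := exists_level_bias_le_and_sum_inv_le hT hc₁ hα hε hε1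
  set N : ℕ → ℕ := fun ℓ => ⌈K * (ε ^ 2)⁻¹ * (T / 2 ^ ℓ) ^ ((β + 1) / 2)⌉₊
  have hN (ℓ : ℕ) : 0 < N ℓ := Nat.ceil_pos.2 (by positivity)
  refine ⟨L, N, fun ℓ _ => hN ℓ, ?_, ?_⟩
  · have hvarL : ∑ ℓ ∈ range (L + 1), Var[Y ℓ (N ℓ); μ] ≤ ε ^ 2 / 2 := calc
      _ ≤ c₂ * ε ^ 2 / K * S := (sum_le_sum fun ℓ _ => hvar ℓ _ (hN ℓ)).trans <|
          sum_mul_inv_mul_div_two_pow_rpow_le hT hβ hc₂.le (by positivity) hε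
            (fun ℓ => Nat.le_ceil _) _
      _ = ε ^ 2 / 2 := by simp only [K]; field_simp
    have hbiasL' := abs_le.1 ((hbias L).trans hbiasL)
    rw [integral_sum_sub_const_sq_of_iIndepFun (fun ℓ => hYint ℓ _) (hindep N),
      sum_integral_eq_integral_of_telescoping (Z := fun ℓ => Y ℓ (N ℓ)) hPhatint (hmean0 _)
        (fun ℓ => hmean ℓ _) L]
    nlinarith
  · rw [Real.rpow_neg hε.le, Real.rpow_two]
    refine (sum_mul_mul_inv_div_two_pow_le hT hβ hc₃.le (by positivity)
      (fun ℓ => (Nat.ceil_lt_add_one (by positivity)).le) _).trans ?_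
    nlinarith

/-- Multilevel Monte Carlo complexity theorem, case `β > 1`:
with bias `|E[P̂_ℓ − P]| ≤ c₁ h_ℓ^α` (`α ≥ 1/2`), independent unbiased level estimators
`Ŷ_ℓ` based on `N_ℓ` samples with `Var[Ŷ_ℓ] ≤ c₂ N_ℓ⁻¹ h_ℓ^β` (`β > 1`), and level cost
`c₃ N_ℓ h_ℓ⁻¹`, there is `c₄` such that for every `ε < e⁻¹` one can choose `L` and `N_ℓ`
so that the combined estimator has mean square error below `ε²` at total cost `≤ c₄ ε⁻²`. -/
theorem mlmc_complexity_beta_gt_one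
    {Ω : Type*} [MeasurableSpace Ω] (μ : Measure Ω) [IsProbabilityMeasure μ]
    (T : ℝ) (hT : 0 < T)
    (P : Ω → ℝ) (hPint : Integrable P μ)
    (Phat : ℕ → Ω → ℝ) (hPhatint : ∀ ℓ, Integrable (Phat ℓ) μ)
    (Y : ℕ → ℕ → Ω → ℝ)   -- `Y ℓ N` : the estimator `Ŷ_ℓ` built from `N` samples
    (h : ℕ → ℝ) (hh : ∀ ℓ, h ℓ = T / 2 ^ ℓ)
    (c₁ c₂ c₃ α β : ℝ) (hc₁ : 0 < c₁) (hc₂ : 0 < c₂) (hc₃ : 0 < c₃)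
    (hα : (1:ℝ)/2 ≤ α) (hβ : 1 < β)
    (hYint : ∀ ℓ N, MemLp (Y ℓ N) 2 μ)
    (hindep : ∀ N : ℕ → ℕ, iIndepFun (fun ℓ => Y ℓ (N ℓ)) μ)
    (hbias : ∀ ℓ, |(∫ ω, Phat ℓ ω ∂μ) - ∫ ω, P ω ∂μ| ≤ c₁ * h ℓ ^ α)
    (hmean0 : ∀ N, ∫ ω, Y 0 N ω ∂μ = ∫ ω, Phat 0 ω ∂μ)
    (hmean : ∀ ℓ N, 1 ≤ ℓ → ∫ ω, Y ℓ N ω ∂μ = ∫ ω, (Phat ℓ ω - Phat (ℓ - 1) ω) ∂μ)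
    (hvar : ∀ ℓ N, 0 < N → variance (Y ℓ N) μ ≤ c₂ * (N : ℝ)⁻¹ * h ℓ ^ β) :
    ∃ c₄ : ℝ, 0 < c₄ ∧ ∀ ε : ℝ, 0 < ε → ε < Real.exp (-1) →
      ∃ (L : ℕ) (N : ℕ → ℕ), (∀ ℓ ≤ L, 0 < N ℓ) ∧
        (∫ ω, ((∑ ℓ ∈ Finset.range (L + 1), Y ℓ (N ℓ) ω) - ∫ ω', P ω' ∂μ) ^ 2 ∂μ < ε ^ 2) ∧
        ∑ ℓ ∈ Finset.range (L + 1), c₃ * (N ℓ : ℝ) * (h ℓ)⁻¹ ≤ c₄ * ε ^ (-2 : ℝ) :=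
  mlmc_complexity_beta_gt_one_general μ T hT P Phat hPhatint Y h hh c₁ c₂ c₃ α β hc₁ hc₂ hc₃ hα hβ
    hYint hindep hbias hmean0 hmean hvar
end

section
/- Suppose 0 ≤ p_τ^f, p_τ^c ≤ 1 with |p_τ^f − p_τ^c| ≤ C h for each of at most K candidate jump times τ, and let R_τ^f, R_τ^c be defined from a shared uniform U by R = 2p if U < 1/2 and R = 2(1−p) otherwise. Then |R_τ^f − R_τ^c| ≤ 2Ch almost surely, and consequently |∏_τ R_τ^f − ∏_τ R_τ^c| ≤ K · 2^K · C h. -/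
open Finset

lemma prod_diff_bound {ι : Type*} [DecidableEq ι] (s : Finset ι) (a b : ι → ℝ) (M ε : ℝ)
    (hM : 0 ≤ M) (hε : 0 ≤ ε)
    (ha : ∀ i ∈ s, |a i| ≤ M) (hb : ∀ i ∈ s, |b i| ≤ M)
    (hab : ∀ i ∈ s, |a i - b i| ≤ ε) :
    |(∏ i ∈ s, a i) - ∏ i ∈ s, b i| ≤ s.card * ε * M ^ (s.card - 1) := by
  induction s using Finset.induction_on with
  | empty => simp
  | @insert x s hx ih =>
    have hprodb : |∏ i ∈ s, b i| ≤ M ^ s.card := by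
      rw [Finset.abs_prod]
      calc ∏ i ∈ s, |b i| ≤ ∏ i ∈ s, M :=
            Finset.prod_le_prod (fun i _ => abs_nonneg _) (fun i hi => hb i (Finset.mem_insert_of_mem hi))
        _ = M ^ s.card := by rw [Finset.prod_const]
    have ih' := ih (fun i hi => ha i (Finset.mem_insert_of_mem hi))
      (fun i hi => hb i (Finset.mem_insert_of_mem hi))
      (fun i hi => hab i (Finset.mem_insert_of_mem hi))
    rw [Finset.prod_insert hx, Finset.prod_insert hx, Finset.card_insert_of_notMem hx]
    have key : a x * ∏ i ∈ s, a i - b x * ∏ i ∈ s, b i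
        = a x * ((∏ i ∈ s, a i) - ∏ i ∈ s, b i) + (a x - b x) * ∏ i ∈ s, b i := by ring
    rw [key]
    have hax := ha x (Finset.mem_insert_self x s)
    have habx := hab x (Finset.mem_insert_self x s)
    calc |a x * ((∏ i ∈ s, a i) - ∏ i ∈ s, b i) + (a x - b x) * ∏ i ∈ s, b i|
        ≤ |a x| * |(∏ i ∈ s, a i) - ∏ i ∈ s, b i| + |a x - b x| * |∏ i ∈ s, b i| := by
          rw [← abs_mul, ← abs_mul]; exact abs_add_le _ _
      _ ≤ M * (s.card * ε * M ^ (s.card - 1)) + ε * M ^ s.card := by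
          gcongr
      _ ≤ (s.card + 1) * ε * M ^ s.card := by
          rcases Nat.eq_zero_or_pos s.card with h0 | hpos
          · simp [h0]
          · have : M * (s.card * ε * M ^ (s.card - 1)) = s.card * ε * M ^ (s.card - 1 + 1) := by ring
            rw [this, Nat.sub_add_cancel hpos]
            have hc : (1:ℝ) ≤ s.card := by exact_mod_cast hpos
            nlinarith [pow_nonneg hM s.card]
      _ = (↑(s.card + 1)) * ε * M ^ (s.card + 1 - 1) := by push_cast; simp

/-- Deterministic bound for the thinning method with change of measure: if the fine and
coarse acceptance probabilities satisfy `|p_τ^f − p_τ^c| ≤ C h` for each of at most `K`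
candidate jumps, and `R_τ = 2p_τ` if `U_τ < 1/2`, `R_τ = 2(1 − p_τ)` otherwise (with the
same uniform `U_τ` for fine and coarse), then `|R_τ^f − R_τ^c| ≤ 2Ch` for each `τ`, and
`|∏_τ R_τ^f − ∏_τ R_τ^c| ≤ K 2^K C h`. -/
theorem thinning_radon_nikodym_product_bound
    (K : ℕ) (C h : ℝ)
    (pf pc U : Fin K → ℝ)
    (hpf0 : ∀ i, 0 ≤ pf i) (hpf1 : ∀ i, pf i ≤ 1)
    (hpc0 : ∀ i, 0 ≤ pc i) (hpc1 : ∀ i, pc i ≤ 1)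
    (hclose : ∀ i, |pf i - pc i| ≤ C * h)
    (Rf Rc : Fin K → ℝ)
    (hRf : ∀ i, Rf i = if U i < 1 / 2 then 2 * pf i else 2 * (1 - pf i))
    (hRc : ∀ i, Rc i = if U i < 1 / 2 then 2 * pc i else 2 * (1 - pc i)) :
    (∀ i, |Rf i - Rc i| ≤ 2 * C * h) ∧
    |(∏ i, Rf i) - ∏ i, Rc i| ≤ K * 2 ^ K * C * h := by
  rcases Nat.eq_zero_or_pos K with hK | hK
  · constructor
    · intro i; exact absurd i.2 (by omega)
    · subst hK; simp
  have hCh : 0 ≤ C * h := le_trans (abs_nonneg _) (hclose ⟨0, hK⟩)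
  have hpt : ∀ i, |Rf i - Rc i| ≤ 2 * C * h := by
    intro i
    rw [hRf, hRc]
    by_cases hu : U i < 1 / 2 <;> simp only [hu, if_true, if_false]
    · have : 2 * pf i - 2 * pc i = 2 * (pf i - pc i) := by ring
      rw [this, abs_mul, abs_two, mul_assoc]
      exact mul_le_mul_of_nonneg_left (hclose i) (by norm_num)
    · have : 2 * (1 - pf i) - 2 * (1 - pc i) = 2 * (pc i - pf i) := by ring
      rw [this, abs_mul, abs_two, abs_sub_comm, mul_assoc]
      exact mul_le_mul_of_nonneg_left (hclose i) (by norm_num)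
  refine ⟨hpt, ?_⟩
  have hRfb : ∀ i ∈ Finset.univ, |Rf i| ≤ 2 := by
    intro i _
    rw [hRf, abs_le]
    by_cases hu : U i < 1 / 2 <;> simp only [hu, if_true, if_false] <;>
      constructor <;> nlinarith [hpf0 i, hpf1 i]
  have hRcb : ∀ i ∈ Finset.univ, |Rc i| ≤ 2 := by
    intro i _
    rw [hRc, abs_le]
    by_cases hu : U i < 1 / 2 <;> simp only [hu, if_true, if_false] <;>
      constructor <;> nlinarith [hpc0 i, hpc1 i]
  have := prod_diff_bound Finset.univ Rf Rc 2 (2 * C * h) (by norm_num)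
    (by linarith) hRfb hRcb (fun i _ => hpt i)
  simp only [Finset.card_univ, Fintype.card_fin] at this
  calc |(∏ i, Rf i) - ∏ i, Rc i| ≤ K * (2 * C * h) * 2 ^ (K - 1) := this
    _ = K * 2 ^ K * C * h := by
        have : (2:ℝ) ^ K = 2 * 2 ^ (K - 1) := by
          rw [← pow_succ']
          congr 1
          omega
        rw [this]; ring
end
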